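/- Let A be a normed division algebra and let a, c ∈ Im A. Then a × (a × c) = −‖a‖² • c + ⟨a,c⟩ • a. -/

import Mathlib

open scoped RealInnerProductSpace

/-- A normed division algebra: a real inner product space with an `ℝ`-bilinear
multiplication (not necessarily associative or commutative), a two-sided
multiplicative identity `one ≠ 0`, satisfying `‖a*b‖ = ‖a‖ * ‖b‖`. -/
structure NormedDivisionAlgebra (A : Type*) [NormedAddCommGroup A] [InnerProductSpace ℝ A] where
  mul : A →ₗ[ℝ] A →ₗ[ℝ] A
  one : A
  one_ne_zero : one ≠ 0
  one_mul : ∀ a : A, mul one a = a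
  mul_one : ∀ a : A, mul a one = a
  norm_mul : ∀ a b : A, ‖mul a b‖ = ‖a‖ * ‖b‖

namespace NormedDivisionAlgebra

variable {A : Type*} [NormedAddCommGroup A] [InnerProductSpace ℝ A]

/-- `Re a`: the orthogonal projection of `a` onto the real part `Re A = ℝ · 1`. -/
noncomputable def re (D : NormedDivisionAlgebra A) (a : A) : A :=
  (⟪a, D.one⟫ / ‖D.one‖ ^ 2) • D.one

/-- `Im a`: the orthogonal projection of `a` onto the imaginary part `Im A = (ℝ · 1)ᗮ`. -/
noncomputable def im (D : NormedDivisionAlgebra A) (a : A) : A := a - D.re a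

/-- The conjugate `conj a = Re a - Im a`. -/
noncomputable def conj (D : NormedDivisionAlgebra A) (a : A) : A := D.re a - D.im a

/-- The real part `Re A = ℝ · 1` as a submodule. -/
def ReSub (D : NormedDivisionAlgebra A) : Submodule ℝ A := Submodule.span ℝ {D.one}

/-- The imaginary part `Im A = (ℝ · 1)ᗮ` as a submodule. -/
noncomputable def ImSub (D : NormedDivisionAlgebra A) : Submodule ℝ A := (Submodule.span ℝ {D.one})ᗮ

/-- The commutator `[a, b] = a*b - b*a`. -/
def comm (D : NormedDivisionAlgebra A) (a b : A) : A := D.mul a b - D.mul b a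

/-- The associator `[a, b, c] = (a*b)*c - a*(b*c)`. -/
def assoc (D : NormedDivisionAlgebra A) (a b c : A) : A :=
  D.mul (D.mul a b) c - D.mul a (D.mul b c)

/-- The cross product `a × b = Im (a*b)` (intended for `a, b ∈ Im A`). -/
noncomputable def cross (D : NormedDivisionAlgebra A) (a b : A) : A := D.im (D.mul a b)

end NormedDivisionAlgebra

/-!
Polarizing the composition law gives `⟪a x, a y⟫ = ‖a‖² ⟪x, y⟫`, and polarizing once more in `a`
against `1` shows that left multiplication by an imaginary `a` is skew-adjoint. Hence
`⟪a (a c), v⟫ = -⟪a c, a v⟫ = -‖a‖² ⟪c, v⟫`, i.e. `a (a c) = -‖a‖² c`. Moreover `⟪a c, 1⟫ = -⟪c, a⟫`, so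
`a × c = a c + ⟪a, c⟫ 1`, and therefore `a × (a × c) = Im (-‖a‖² c + ⟪a, c⟫ a)`, whose argument
is already imaginary.
-/

namespace NormedDivisionAlgebra

variable {A : Type*} [NormedAddCommGroup A] [InnerProductSpace ℝ A] (D : NormedDivisionAlgebra A)

theorem norm_one : ‖D.one‖ = 1 := by
  have h : ‖D.one‖ * ‖D.one‖ = ‖D.one‖ * 1 := by rw [← D.norm_mul, D.one_mul, _root_.mul_one]
  exact mul_left_cancel₀ (norm_ne_zero_iff.mpr D.one_ne_zero) h

theorem mem_imSub_iff {x : A} : x ∈ D.ImSub ↔ ⟪x, D.one⟫ = 0 :=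
  Submodule.mem_orthogonal_singleton_iff_inner_left

theorem im_eq_self_of_mem_imSub {x : A} (hx : x ∈ D.ImSub) : D.im x = x := by
  rw [im, re, (D.mem_imSub_iff).mp hx, zero_div, zero_smul, sub_zero]

theorem inner_mul_mul_left (a x y : A) : ⟪D.mul a x, D.mul a y⟫ = ‖a‖ ^ 2 * ⟪x, y⟫ := by
  have h : ‖D.mul a (x + y)‖ ^ 2 = (‖a‖ * ‖x + y‖) ^ 2 := by rw [D.norm_mul]
  rw [map_add, norm_add_sq_real, mul_pow, norm_add_sq_real, D.norm_mul, D.norm_mul] at h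
  linear_combination h / 2

theorem inner_mul_mul_add_inner_mul_mul (a c x y : A) :
    ⟪D.mul a x, D.mul c y⟫ + ⟪D.mul c x, D.mul a y⟫ = 2 * ⟪a, c⟫ * ⟪x, y⟫ := by
  have h := D.inner_mul_mul_left (a + c) x y
  simp only [map_add, LinearMap.add_apply, inner_add_left, inner_add_right,
    norm_add_sq_real, D.inner_mul_mul_left] at h
  linear_combination h

theorem inner_mul_left_eq_neg {a : A} (ha : a ∈ D.ImSub) (x y : A) :
    ⟪D.mul a x, y⟫ = -⟪x, D.mul a y⟫ := by
  have h := D.inner_mul_mul_add_inner_mul_mul a D.one x y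
  rw [D.one_mul, D.one_mul, (D.mem_imSub_iff).mp ha] at h
  linear_combination h

theorem mul_mul_self_left {a : A} (ha : a ∈ D.ImSub) (c : A) :
    D.mul a (D.mul a c) = (-(‖a‖ ^ 2)) • c := by
  refine ext_inner_right ℝ fun v => ?_
  rw [D.inner_mul_left_eq_neg ha, D.inner_mul_mul_left, real_inner_smul_left]
  ring

theorem cross_eq_mul_add_inner_smul_one {a : A} (ha : a ∈ D.ImSub) (c : A) :
    D.cross a c = D.mul a c + ⟪a, c⟫ • D.one := by
  have h : ⟪D.mul a c, D.one⟫ = -⟪a, c⟫ := by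
    rw [D.inner_mul_left_eq_neg ha, D.mul_one, real_inner_comm]
  rw [cross, im, re, h, D.norm_one, one_pow, div_one, neg_smul, sub_neg_eq_add]

end NormedDivisionAlgebra

theorem nda_cross_cross_self {A : Type*} [NormedAddCommGroup A] [InnerProductSpace ℝ A]
    (D : NormedDivisionAlgebra A) (a c : A) (ha : a ∈ D.ImSub) (hc : c ∈ D.ImSub) :
    D.cross a (D.cross a c) = (-(‖a‖ ^ 2)) • c + ⟪a, c⟫ • a := by
  have h_im : (-(‖a‖ ^ 2)) • c + ⟪a, c⟫ • a ∈ D.ImSub :=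
    add_mem (Submodule.smul_mem _ _ hc) (Submodule.smul_mem _ _ ha)
  rw [NormedDivisionAlgebra.cross, D.cross_eq_mul_add_inner_smul_one ha, map_add, map_smul, D.mul_one,
    D.mul_mul_self_left ha, D.im_eq_self_of_mem_imSub h_im]
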